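/- The box distance between geometric data sets satisfies the triangle inequality: for all geometric data sets X, Y, Z, we have □(X,Z) ≤ □(X,Y) + □(Y,Z). Together with symmetry, nonnegativity, and non-degeneracy, □ is a metric on the set of isomorphism classes of geometric data sets. -/

import Mathlib

open MeasureTheory Topology Filter ENNReal

noncomputable section

/-- The Ky Fan (extended) pseudometric between two maps, w.r.t. a measure `π`:
`inf {ε ≥ 0 | π {ω | d (u ω) (v ω) > ε} ≤ ε}`. -/
def kyFan {Ω E : Type*} [MeasurableSpace Ω] [PseudoEMetricSpace E]
    (π : Measure Ω) (u v : Ω → E) : ℝ≥0∞ :=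
  sInf {ε : ℝ≥0∞ | π {ω | ε < edist (u ω) (v ω)} ≤ ε}

/-- Hausdorff distance between two sets w.r.t. an abstract extended pseudometric `d`. -/
def hausd {α : Type*} (d : α → α → ℝ≥0∞) (A B : Set α) : ℝ≥0∞ :=
  max (⨆ a : A, ⨅ b : B, d a b) (⨆ b : B, ⨅ a : A, d a b)

/-- The sup (extended) pseudometric `d∞^A` over a subset `A`. -/
def dInfty {α β : Type*} [PseudoEMetricSpace β] (A : Set α) (u v : α → β) : ℝ≥0∞ :=
  ⨆ a : A, edist (u a) (v a)

/-- A geometric data set: a complete separable metric space whose distance is the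
supremum of feature differences over a nonempty family `F` of real-valued functions,
equipped with a fully supported Borel probability measure. -/
structure GDS where
  carrier : Type
  met : MetricSpace carrier
  cms : CompleteSpace carrier
  sep : TopologicalSpace.SeparableSpace carrier
  msp : MeasurableSpace carrier
  bor : BorelSpace carrier
  F : Set (carrier → ℝ)
  F_nonempty : F.Nonempty
  dist_isLUB : ∀ x y : carrier, IsLUB ((fun f => |f x - f y|) '' F) (dist x y)
  μ : Measure carrier
  prob : IsProbabilityMeasure μ
  full_support : ∀ U : Set carrier, IsOpen U → U.Nonempty → 0 < μ U

attribute [instance] GDS.met GDS.cms GDS.sep GDS.msp GDS.bor GDS.prob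

/-- A coupling of the measures of two geometric data sets. -/
def GDS.Coupling (X Y : GDS) (π : Measure (X.carrier × Y.carrier)) : Prop :=
  IsProbabilityMeasure π ∧ π.map Prod.fst = X.μ ∧ π.map Prod.snd = Y.μ

/-- A parameter of a measure `μ`: a Borel measurable map from `[0,1]` (with Lebesgue
measure) pushing the Lebesgue measure forward to `μ`. -/
def IsParam {X : Type*} [MeasurableSpace X] (μ : Measure X)
    (φ : Set.Icc (0:ℝ) 1 → X) : Prop :=
  Measurable φ ∧ Measure.map φ volume = μ

/-- The observable distance between two geometric data sets. -/
def dConc (X Y : GDS) : ℝ≥0∞ :=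
  ⨅ (φ : Set.Icc (0:ℝ) 1 → X.carrier) (_ : IsParam X.μ φ)
    (ψ : Set.Icc (0:ℝ) 1 → Y.carrier) (_ : IsParam Y.μ ψ),
    hausd (kyFan (volume : Measure (Set.Icc (0:ℝ) 1)))
      ((· ∘ φ) '' X.F) ((· ∘ ψ) '' Y.F)

/-- `d_conc^π`, the Hausdorff distance w.r.t. the Ky Fan metric of a coupling `π`. -/
def dConcCoupling (X Y : GDS) (π : Measure (X.carrier × Y.carrier)) : ℝ≥0∞ :=
  hausd (kyFan π) ((· ∘ Prod.fst) '' X.F) ((· ∘ Prod.snd) '' Y.F)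

/-- The Prohorov distance between two Borel measures. -/
def prohorov {Z : Type*} [PseudoEMetricSpace Z] [MeasurableSpace Z]
    (μ ν : Measure Z) : ℝ≥0∞ :=
  sInf {ε : ℝ≥0∞ | ∀ A : Set Z, MeasurableSet A →
    ν A ≤ μ {z | EMetric.infEdist z A < ε} + ε}

/-- The `a`-partial diameter of a Borel measure on `ℝ`. -/
def partialDiam (ν : Measure ℝ) (a : ℝ≥0∞) : ℝ≥0∞ :=
  ⨅ (I : Set ℝ) (_ : MeasurableSet I) (_ : a ≤ ν I), EMetric.diam I

/-- The `κ`-observable diameter `ObsDiam(X; -κ)` of a geometric data set. -/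
def obsDiam (X : GDS) (κ : ℝ) : ℝ≥0∞ :=
  ⨆ f : X.F, partialDiam (X.μ.map f) (ENNReal.ofReal (1 - κ))

/-- The distortion of a subset `S ⊆ X × Y`. -/
def distortion {X Y : Type*} [PseudoMetricSpace X] [PseudoMetricSpace Y]
    (S : Set (X × Y)) : ℝ≥0∞ :=
  ⨆ (p : S) (q : S), edist (dist p.1.1 q.1.1) (dist p.1.2 q.1.2)

/-- `□_π^S(F, G) = max {1 - π S, 2 H_{d∞^S}(F ∘ pr₁, G ∘ pr₂)}`. -/
def boxS (X Y : GDS) (π : Measure (X.carrier × Y.carrier))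
    (S : Set (X.carrier × Y.carrier))
    (F : Set (X.carrier → ℝ)) (G : Set (Y.carrier → ℝ)) : ℝ≥0∞ :=
  max (1 - π S) (2 * hausd (dInfty S) ((· ∘ Prod.fst) '' F) ((· ∘ Prod.snd) '' G))

/-- `□_π(F, G)`, infimum of `□_π^S(F, G)` over closed `S`. -/
def boxCoupling (X Y : GDS) (π : Measure (X.carrier × Y.carrier))
    (F : Set (X.carrier → ℝ)) (G : Set (Y.carrier → ℝ)) : ℝ≥0∞ :=
  ⨅ (S : Set (X.carrier × Y.carrier)) (_ : IsClosed S), boxS X Y π S F G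

/-- The box distance between two geometric data sets. -/
def boxDist (X Y : GDS) : ℝ≥0∞ :=
  ⨅ (π : Measure (X.carrier × Y.carrier)) (_ : X.Coupling Y π),
    boxCoupling X Y π X.F Y.F

/-- The distortion `dis π` of a coupling `π`. -/
def disCoupling (X Y : GDS) (π : Measure (X.carrier × Y.carrier)) : ℝ≥0∞ :=
  ⨅ (S : Set (X.carrier × Y.carrier)) (_ : IsClosed S), max (1 - π S) (distortion S)

/-- `X ⪯ Y` : the geometric data set `Y` dominates `X` (feature order). -/
def GDS.Dominates (Y X : GDS) : Prop :=
  ∃ p : Y.carrier → X.carrier, Measurable p ∧ Y.μ.map p = X.μ ∧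
    (· ∘ p) '' X.F ⊆ closure Y.F

/-!
Glue couplings `π₁` of `(X, Y)` and `π₂` of `(Y, Z)` along their common marginal `μ_Y` into a
measure on `X × Y × Z` and push it forward to `X × Z`. Given closed `S₁, S₂`, use the closure `S`
of the composite relation `S₁ ○ S₂`. Under the glued measure, a triple whose `(x, z)` lies outside
`S` must have `(x, y) ∉ S₁` or `(y, z) ∉ S₂`, so `1 - π S ≤ (1 - π₁ S₁) + (1 - π₂ S₂)`. On
`S₁ ○ S₂` we have `|f x - h z| ≤ |f x - g y| + |g y - h z|`, and since features are continuous
this bound extends to the closure. This gives the triangle inequality for the Hausdorff terms.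
-/

open scoped SetRel

section Hausdorff

variable {α β γ ι κ : Type*}

lemma hausd_image_image (d : γ → γ → ℝ≥0∞) (m₁ : ι → γ) (m₂ : κ → γ)
    (A : Set ι) (B : Set κ) :
    hausd d (m₁ '' A) (m₂ '' B) =
      max (⨆ a ∈ A, ⨅ b ∈ B, d (m₁ a) (m₂ b)) (⨆ b ∈ B, ⨅ a ∈ A, d (m₁ a) (m₂ b)) := by
  simp only [hausd, iSup_subtype, iInf_subtype, iSup_image, iInf_image]

lemma iSup₂_iInf₂_le_add {A : Set α} {B : Set β} {C : Set γ}
    {d₁ : α → β → ℝ≥0∞} {d₂ : β → γ → ℝ≥0∞} {d₃ : α → γ → ℝ≥0∞}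
    (h : ∀ a ∈ A, ∀ b ∈ B, ∀ c ∈ C, d₃ a c ≤ d₁ a b + d₂ b c) :
    ⨆ a ∈ A, ⨅ c ∈ C, d₃ a c ≤
      (⨆ a ∈ A, ⨅ b ∈ B, d₁ a b) + ⨆ b ∈ B, ⨅ c ∈ C, d₂ b c := by
  refine iSup₂_le fun a ha => ?_
  calc ⨅ c ∈ C, d₃ a c
      ≤ ⨅ b ∈ B, (d₁ a b + ⨆ b ∈ B, ⨅ c ∈ C, d₂ b c) := by
        refine le_iInf₂ fun b hb => ?_
        refine le_add_of_le_add_left ?_ (le_iSup₂ (f := fun b _ => ⨅ c ∈ C, d₂ b c) b hb)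
        rw [ENNReal.add_iInf₂]
        exact le_iInf₂ fun c hc => iInf₂_le_of_le c hc (h a ha b hb c hc)
    _ = (⨅ b ∈ B, d₁ a b) + ⨆ b ∈ B, ⨅ c ∈ C, d₂ b c := (ENNReal.iInf₂_add _).symm
    _ ≤ _ := add_le_add_left (le_iSup₂ (f := fun a _ => ⨅ b ∈ B, d₁ a b) a ha) _

lemma max_iSup₂_iInf₂_le_add {A : Set α} {B : Set β} {C : Set γ}
    {d₁ : α → β → ℝ≥0∞} {d₂ : β → γ → ℝ≥0∞} {d₃ : α → γ → ℝ≥0∞}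
    (h : ∀ a ∈ A, ∀ b ∈ B, ∀ c ∈ C, d₃ a c ≤ d₁ a b + d₂ b c) :
    max (⨆ a ∈ A, ⨅ c ∈ C, d₃ a c) (⨆ c ∈ C, ⨅ a ∈ A, d₃ a c) ≤
      max (⨆ a ∈ A, ⨅ b ∈ B, d₁ a b) (⨆ b ∈ B, ⨅ a ∈ A, d₁ a b) +
        max (⨆ b ∈ B, ⨅ c ∈ C, d₂ b c) (⨆ c ∈ C, ⨅ b ∈ B, d₂ b c) := by
  refine (max_le_max (iSup₂_iInf₂_le_add h) ?_).trans max_add_add_le_max_add_max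
  rw [add_comm]
  exact iSup₂_iInf₂_le_add fun c hc b hb a ha => (h a ha b hb c hc).trans_eq (add_comm _ _)

end Hausdorff

section SupDistance

variable {α β γ E : Type*} [PseudoEMetricSpace E]

lemma dInfty_closure [TopologicalSpace α] (A : Set α) {u v : α → E}
    (hu : Continuous u) (hv : Continuous v) :
    dInfty (closure A) u v = dInfty A u v := by
  refine le_antisymm (iSup_le fun x => ?_)
    (iSup_le fun a => le_iSup_of_le ⟨a, subset_closure a.2⟩ le_rfl)
  have hA : closure A ⊆ {x | edist (u x) (v x) ≤ dInfty A u v} :=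
    closure_minimal (fun x hx => le_iSup (fun a : A => edist (u a) (v a)) ⟨x, hx⟩)
      (isClosed_le (hu.edist hv) continuous_const)
  exact hA x.2

lemma dInfty_comp_le (S₁ : Set (α × β)) (S₂ : Set (β × γ)) (f : α → E) (g : β → E)
    (h : γ → E) :
    dInfty (S₁ ○ S₂) (f ∘ Prod.fst) (h ∘ Prod.snd) ≤
      dInfty S₁ (f ∘ Prod.fst) (g ∘ Prod.snd) + dInfty S₂ (g ∘ Prod.fst) (h ∘ Prod.snd) := by
  refine iSup_le fun ⟨⟨a, c⟩, b, hab, hbc⟩ => (edist_triangle (f a) (g b) (h c)).trans ?_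
  exact add_le_add (le_iSup (fun p : S₁ => edist (f p.1.1) (g p.1.2)) ⟨(a, b), hab⟩)
    (le_iSup (fun p : S₂ => edist (g p.1.1) (h p.1.2)) ⟨(b, c), hbc⟩)

lemma hausd_dInfty_closure_comp_le [TopologicalSpace α] [TopologicalSpace γ]
    {F : Set (α → E)} {G : Set (β → E)} {H : Set (γ → E)}
    (hF : ∀ f ∈ F, Continuous f) (hH : ∀ h ∈ H, Continuous h)
    (S₁ : Set (α × β)) (S₂ : Set (β × γ)) :
    hausd (dInfty (closure (S₁ ○ S₂))) ((· ∘ Prod.fst) '' F) ((· ∘ Prod.snd) '' H) ≤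
      hausd (dInfty S₁) ((· ∘ Prod.fst) '' F) ((· ∘ Prod.snd) '' G) +
        hausd (dInfty S₂) ((· ∘ Prod.fst) '' G) ((· ∘ Prod.snd) '' H) := by
  simp only [hausd_image_image]
  refine max_iSup₂_iInf₂_le_add fun f hf g _ h hh => ?_
  rw [dInfty_closure _ ((hF f hf).comp continuous_fst) ((hH h hh).comp continuous_snd)]
  exact dInfty_comp_le S₁ S₂ f g h

end SupDistance

section Gluing

open ProbabilityTheory

variable {α β γ : Type*} [MeasurableSpace α] [MeasurableSpace β] [MeasurableSpace γ]

-- The glued measure makes `α` and `γ` conditionally independent given `β`.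
theorem exists_measure_map_eq_of_snd_eq_fst [StandardBorelSpace α] [Nonempty α]
    [StandardBorelSpace γ] [Nonempty γ] (π₁ : Measure (α × β)) (π₂ : Measure (β × γ))
    [IsFiniteMeasure π₁] [IsFiniteMeasure π₂] (h : π₁.snd = π₂.fst) :
    ∃ ν : Measure (α × β × γ),
      ν.map (fun p => (p.1, p.2.1)) = π₁ ∧ ν.map Prod.snd = π₂ := by
  set ρ₁ := π₁.map Prod.swap
  have hρ₁ : π₂.fst ⊗ₘ ρ₁.condKernel = ρ₁ := by
    rw [← h, ← Measure.fst_map_swap]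
    exact ρ₁.disintegrate _
  set ν₀ : Measure (β × α × γ) := π₂.fst ⊗ₘ (ρ₁.condKernel ×ₖ π₂.condKernel)
  refine ⟨ν₀.map fun p => (p.2.1, p.1, p.2.2), ?_, ?_⟩
  · calc _ = (ν₀.map (Prod.map id Prod.fst)).map Prod.swap := by
          rw [Measure.map_map (by fun_prop) (by fun_prop),
            Measure.map_map (by fun_prop) (by fun_prop)]
          rfl
      _ = ρ₁.map Prod.swap := by
          rw [← Measure.compProd_map measurable_fst, ← Kernel.fst_eq, Kernel.fst_prod, hρ₁]
      _ = π₁ := by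
          rw [Measure.map_map measurable_swap measurable_swap, Prod.swap_swap_eq, Measure.map_id]
  · calc _ = ν₀.map (Prod.map id Prod.snd) := by
          rw [Measure.map_map (by fun_prop) (by fun_prop)]
          rfl
      _ = π₂ := by
          rw [← Measure.compProd_map measurable_snd, ← Kernel.snd_eq, Kernel.snd_prod,
            π₂.disintegrate]

lemma measure_map_compl_le_add (ν : Measure (α × β × γ)) {S₁ : Set (α × β)}
    {S₂ : Set (β × γ)} {S : Set (α × γ)} (hS₁ : MeasurableSet S₁) (hS₂ : MeasurableSet S₂)
    (hS : MeasurableSet S) (hsub : S₁ ○ S₂ ⊆ S) :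
    ν.map (fun p => (p.1, p.2.2)) Sᶜ ≤ ν.map (fun p => (p.1, p.2.1)) S₁ᶜ + ν.map Prod.snd S₂ᶜ := by
  rw [Measure.map_apply (by fun_prop) hS.compl, Measure.map_apply (by fun_prop) hS₁.compl,
    Measure.map_apply measurable_snd hS₂.compl]
  refine (measure_mono fun p hp => ?_).trans (measure_union_le _ _)
  by_contra hp'
  simp only [Set.mem_union, Set.mem_preimage, Set.mem_compl_iff, not_or, not_not] at hp'
  exact hp (hsub ⟨p.2.1, hp'.1, hp'.2⟩)

end Gluing

instance GDS.instNonempty (X : GDS) : Nonempty X.carrier :=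
  nonempty_of_isProbabilityMeasure X.μ

lemma GDS.lipschitzWith_one_of_mem (X : GDS) {f : X.carrier → ℝ} (hf : f ∈ X.F) :
    LipschitzWith 1 f :=
  LipschitzWith.of_dist_le_mul fun x y => by
    simpa [Real.dist_eq] using (X.dist_isLUB x y).1 (Set.mem_image_of_mem _ hf)

lemma GDS.Coupling.glue {X Y Z : GDS} {π₁ : Measure (X.carrier × Y.carrier)}
    {π₂ : Measure (Y.carrier × Z.carrier)} (h₁ : X.Coupling Y π₁) (h₂ : Y.Coupling Z π₂)
    {ν : Measure (X.carrier × Y.carrier × Z.carrier)}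
    (hν₁ : ν.map (fun p => (p.1, p.2.1)) = π₁) (hν₂ : ν.map Prod.snd = π₂) :
    X.Coupling Z (ν.map fun p => (p.1, p.2.2)) := by
  have : IsProbabilityMeasure ν := by
    have := h₂.1
    rw [← hν₂] at this
    exact Measure.isProbabilityMeasure_of_map Prod.snd
  refine ⟨Measure.isProbabilityMeasure_map (by fun_prop), ?_, ?_⟩
  · rw [Measure.map_map (by fun_prop) (by fun_prop), ← h₁.2.1, ← hν₁,
      Measure.map_map (by fun_prop) (by fun_prop)]
    rfl
  · rw [Measure.map_map (by fun_prop) (by fun_prop), ← h₂.2.2, ← hν₂,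
      Measure.map_map (by fun_prop) (by fun_prop)]
    rfl

lemma boxS_closure_comp_le {X Y Z : GDS} {π₁ : Measure (X.carrier × Y.carrier)}
    {π₂ : Measure (Y.carrier × Z.carrier)} {π : Measure (X.carrier × Z.carrier)}
    [IsProbabilityMeasure π₁] [IsProbabilityMeasure π₂] [IsProbabilityMeasure π]
    {S₁ : Set (X.carrier × Y.carrier)} {S₂ : Set (Y.carrier × Z.carrier)}
    (hS₁ : MeasurableSet S₁) (hS₂ : MeasurableSet S₂)
    (hπ : π (closure (S₁ ○ S₂))ᶜ ≤ π₁ S₁ᶜ + π₂ S₂ᶜ) :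
    boxS X Z π (closure (S₁ ○ S₂)) X.F Z.F ≤
      boxS X Y π₁ S₁ X.F Y.F + boxS Y Z π₂ S₂ Y.F Z.F := by
  refine (max_le_max ?_ ?_).trans max_add_add_le_max_add_max
  · simpa only [prob_compl_eq_one_sub, hS₁, hS₂, isClosed_closure.measurableSet] using hπ
  · rw [← mul_add]
    gcongr
    exact hausd_dInfty_closure_comp_le (fun f hf => (X.lipschitzWith_one_of_mem hf).continuous)
      (fun h hh => (Z.lipschitzWith_one_of_mem hh).continuous) S₁ S₂

/-- The box distance satisfies the triangle inequality. -/
theorem boxDist_triangle (X Y Z : GDS) :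
    boxDist X Z ≤ boxDist X Y + boxDist Y Z := by
  refine ENNReal.le_iInf₂_add_iInf₂ fun π₁ h₁ π₂ h₂ => ?_
  have := h₁.1
  have := h₂.1
  obtain ⟨ν, hν₁, hν₂⟩ := exists_measure_map_eq_of_snd_eq_fst π₁ π₂ (h₁.2.2.trans h₂.2.1.symm)
  have hπ := h₁.glue h₂ hν₁ hν₂
  have := hπ.1
  refine (iInf₂_le _ hπ).trans <| ENNReal.le_iInf₂_add_iInf₂ fun S₁ hS₁ S₂ hS₂ => ?_
  refine (iInf₂_le _ isClosed_closure).trans <|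
    boxS_closure_comp_le hS₁.measurableSet hS₂.measurableSet ?_
  rw [← hν₁, ← hν₂]
  exact measure_map_compl_le_add ν hS₁.measurableSet hS₂.measurableSet
    isClosed_closure.measurableSet subset_closure
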